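/- Let R be a left-linear TRS and ℓ → r ∈ R a rule. If σ and σ' are substitutions such that xσ rewrites to xσ' by a parallel step for every variable x, then ℓσ rewrites to ℓσ' by a parallel step followed by the root step ℓσ' → rσ', and also ℓσ → rσ rewrites to rσ' by a parallel step. (Parallel Moves Lemma, substitution form.) -/

import Mathlib

/-- First-order terms over a signature `F` with natural-number variables. -/
inductive Trm (F : Type) : Type
  | var : ℕ → Trm F
  | app : F → List (Trm F) → Trm F

namespace Trm

variable {F : Type}

/-- Application of a substitution to a term. -/
def subst (σ : ℕ → Trm F) : Trm F → Trm F
  | var n => σ n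
  | app f ts => app f (ts.attach.map fun x => subst σ x.1)
decreasing_by have := List.sizeOf_lt_of_mem x.2; simp; omega

/-- The list of variables occurring in a term. -/
def varList : Trm F → List ℕ
  | var n => [n]
  | app _ ts => ts.attach.flatMap fun x => varList x.1
decreasing_by have := List.sizeOf_lt_of_mem x.2; simp; omega

/-- A term is ground if it contains no variables. -/
def Ground (t : Trm F) : Prop := varList t = []

/-- The subterm at a position (a list of argument indices), if it exists. -/
def subtermAt : Trm F → List ℕ → Option (Trm F)
  | t, [] => some t
  | var _, _ :: _ => none
  | app _ ts, i :: p => (ts[i]?).bind fun t => subtermAt t p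

/-- Replacement of the subterm at a position by another term, if the position exists. -/
def replaceAt : Trm F → List ℕ → Trm F → Option (Trm F)
  | _, [], s => some s
  | var _, _ :: _, _ => none
  | app f ts, i :: p, s =>
      (ts[i]?).bind fun t => (replaceAt t p s).map fun t' => app f (ts.set i t')

def IsVar : Trm F → Prop
  | var _ => True
  | app _ _ => False

end Trm

open Trm

variable {F : Type}

/-- A rewrite rule is a pair (lhs, rhs). -/
abbrev Rule (F : Type) := Trm F × Trm F

/-- A term is a redex w.r.t. a TRS `R` if it is an instance of a left-hand side. -/
def IsRedex (R : Set (Rule F)) (t : Trm F) : Prop :=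
  ∃ (l r : Trm F) (σ : ℕ → Trm F), (l, r) ∈ R ∧ t = subst σ l

/-- `t` has a redex at position `p`. -/
def HasRedexAt (R : Set (Rule F)) (t : Trm F) (p : List ℕ) : Prop :=
  ∃ s, subtermAt t p = some s ∧ IsRedex R s

/-- A rewrite step of `R` at position `p`. -/
def RewriteAt (R : Set (Rule F)) (t t' : Trm F) (p : List ℕ) : Prop :=
  ∃ (l r : Trm F) (σ : ℕ → Trm F), (l, r) ∈ R ∧
    subtermAt t p = some (subst σ l) ∧ replaceAt t p (subst σ r) = some t'

/-- A rewrite step of `R` (at some position). -/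
def Rewrite (R : Set (Rule F)) (t t' : Trm F) : Prop := ∃ p, RewriteAt R t t' p

/-- Many-step rewriting. -/
abbrev RewriteStar (R : Set (Rule F)) : Trm F → Trm F → Prop :=
  Relation.ReflTransGen (Rewrite R)

/-- `p` is a strict (proper) prefix of `q`, i.e. position `p` is strictly above `q`. -/
def StrictPref (p q : List ℕ) : Prop := p <+: q ∧ p ≠ q

/-- Two positions are independent (parallel) if neither is a prefix of the other. -/
def Indep (p q : List ℕ) : Prop := ¬ p <+: q ∧ ¬ q <+: p

/-- An outermost rewrite step at position `p`: no redex strictly above `p`. -/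
def OutStepAt (R : Set (Rule F)) (t t' : Trm F) (p : List ℕ) : Prop :=
  RewriteAt R t t' p ∧ ∀ q, StrictPref q p → ¬ HasRedexAt R t q

def OutStep (R : Set (Rule F)) (t t' : Trm F) : Prop := ∃ p, OutStepAt R t t' p

/-- A non-outermost rewrite step at position `p`: some redex strictly above `p`. -/
def NonOutStepAt (R : Set (Rule F)) (t t' : Trm F) (p : List ℕ) : Prop :=
  RewriteAt R t t' p ∧ ∃ q, StrictPref q p ∧ HasRedexAt R t q

def NonOutStep (R : Set (Rule F)) (t t' : Trm F) : Prop := ∃ p, NonOutStepAt R t t' p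

/-- A sequence of rewrite steps at the listed positions. -/
inductive StepsAt (R : Set (Rule F)) : Trm F → Trm F → List (List ℕ) → Prop
  | nil (t) : StepsAt R t t []
  | cons {t t' t'' p ps} : RewriteAt R t t' p → StepsAt R t' t'' ps →
      StepsAt R t t'' (p :: ps)

/-- A parallel rewrite step: contraction of redexes at pairwise independent positions. -/
def ParStep (R : Set (Rule F)) (t t' : Trm F) : Prop :=
  ∃ ps : List (List ℕ), ps.Pairwise Indep ∧ StepsAt R t t' ps

/-- A parallel step all of whose contracted positions are non-outermost in the source,
i.e. each contracted redex lies strictly below another redex. -/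
def ParNonOut (R : Set (Rule F)) (t t' : Trm F) : Prop :=
  ∃ ps : List (List ℕ), ps.Pairwise Indep ∧
    (∀ p ∈ ps, ∃ q, StrictPref q p ∧ HasRedexAt R t q) ∧ StepsAt R t t' ps

/-- Left-linearity: no variable occurs twice in a left-hand side. -/
def LeftLinear (R : Set (Rule F)) : Prop := ∀ l r, (l, r) ∈ R → (varList l).Nodup

/-- Non-overlapping: the only overlaps between left-hand sides are trivial root
overlaps of a rule with itself. -/
def NonOverlapping (R : Set (Rule F)) : Prop :=
  ∀ l₁ r₁ l₂ r₂, (l₁, r₁) ∈ R → (l₂, r₂) ∈ R →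
    ∀ p s, subtermAt l₁ p = some s → ¬ IsVar s →
      ∀ (σ τ : ℕ → Trm F), subst σ s = subst τ l₂ →
        p = [] ∧ l₁ = l₂ ∧ r₁ = r₂

/-- Orthogonality: left-linear and non-overlapping. -/
def Orthogonal (R : Set (Rule F)) : Prop := LeftLinear R ∧ NonOverlapping R

/-- A symbol `c` is a constructor of `R` if no left-hand side has root `c`. -/
def IsConstructor (R : Set (Rule F)) (c : F) : Prop :=
  ∀ l r, (l, r) ∈ R → ∀ ts, l ≠ app c ts

/-- An infinite outermost reduction (with its sequence of contracted positions). -/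
def InfOutRed (R : Set (Rule F)) (ts : ℕ → Trm F) (ps : ℕ → List ℕ) : Prop :=
  ∀ i, OutStepAt R (ts i) (ts (i + 1)) (ps i)

/-- Balancedness: every redex is eventually reduced or consumed by a step at or
above its position. -/
def BalancedRed (R : Set (Rule F)) (ts : ℕ → Trm F) (ps : ℕ → List ℕ) : Prop :=
  ∀ i q, HasRedexAt R (ts i) q → ∃ j, i ≤ j ∧ ps j <+: q

/-- BalancedRed outermost termination: no infinite balanced outermost reduction. -/
def BalOutTerminating (R : Set (Rule F)) : Prop :=
  ¬ ∃ (ts : ℕ → Trm F) (ps : ℕ → List ℕ), InfOutRed R ts ps ∧ BalancedRed R ts ps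

/-- Outermost termination: no infinite outermost reduction. -/
def OutTerminating (R : Set (Rule F)) : Prop :=
  ¬ ∃ (ts : ℕ → Trm F) (ps : ℕ → List ℕ), InfOutRed R ts ps

/-- A term with the stream constructor ':' (here `c`) at the root. -/
def ConsRooted (c : F) (t : Trm F) : Prop := ∃ u t', t = app c [u, t']

/-- `ConsTower c n t` says `t = u₁ : u₂ : ⋯ : uₙ : t'`. -/
def ConsTower (c : F) : ℕ → Trm F → Prop
  | 0, _ => True
  | n + 1, t => ∃ u t', t = app c [u, t'] ∧ ConsTower c n t'

/-- Productivity of a term: it produces arbitrarily many ':'-elements. -/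
def Productive (R : Set (Rule F)) (c : F) (t : Trm F) : Prop :=
  ∀ n, ∃ t', RewriteStar R t t' ∧ ConsTower c n t'

/-- Well-sortedness of terms, with sorts `Bool` (`false` = data, `true` = stream),
argument/result sorts given by `ar` and variable sorts by `vs`. -/
inductive WS (ar : F → List Bool × Bool) (vs : ℕ → Bool) : Trm F → Bool → Prop
  | var (n) : WS ar vs (var n) (vs n)
  | app (f) (ts : List (Trm F)) : ts.length = (ar f).1.length →
      (∀ (i : ℕ) t b, ts[i]? = some t → (ar f).1[i]? = some b → WS ar vs t b) →
      WS ar vs (app f ts) (ar f).2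

/-- All function symbols of a term belong to the set `S`. -/
inductive SymOver (S : Set F) : Trm F → Prop
  | var (n) : SymOver S (var n)
  | app (f) (ts : List (Trm F)) : f ∈ S → (∀ t ∈ ts, SymOver S t) → SymOver S (app f ts)

/-- A stream specification `(Σ_d, Σ_s, R_d, R_s)` over signature `F`. -/
structure StreamSpec (F : Type) where
  /-- argument sorts and result sort of each symbol -/
  ar : F → List Bool × Bool
  /-- sorts of variables -/
  vs : ℕ → Bool
  /-- the stream constructor ':' of type d × s → s -/
  cons : F
  cons_ar : ar cons = ([false, true], true)
  /-- the data signature Σ_d -/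
  Sd : Set F
  /-- the stream signature Σ_s -/
  Ss : Set F
  cons_not_d : cons ∉ Sd
  cons_not_s : cons ∉ Ss
  d_sorts : ∀ f ∈ Sd, (∀ b ∈ (ar f).1, b = false) ∧ (ar f).2 = false
  s_res : ∀ f ∈ Ss, (ar f).2 = true
  /-- the data rules -/
  Rd : Set (Rule F)
  /-- the stream rules -/
  Rs : Set (Rule F)
  Rd_data : ∀ rl ∈ Rd, SymOver Sd rl.1 ∧ SymOver Sd rl.2
  Rd_sorted : ∀ l r, (l, r) ∈ Rd → WS ar vs l false ∧ WS ar vs r false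
  /-- R_d is terminating -/
  Rd_term : WellFounded (fun a b : Trm F => Rewrite Rd b a)
  /-- R_d ∪ R_s is orthogonal -/
  orth : Orthogonal (Rd ∪ Rs)
  Rs_sorted : ∀ l r, (l, r) ∈ Rs → WS ar vs l true ∧ WS ar vs r true
  /-- left-hand sides of R_s have the shape f(u₁,…,uₙ,t₁,…,tₘ) with f ∈ Σ_s and
  each stream argument tᵢ a variable or of the form x : σ -/
  lhs_shape : ∀ l r, (l, r) ∈ Rs → ∃ f args, f ∈ Ss ∧ l = app f args ∧
    ∀ (i : ℕ) a, args[i]? = some a → (ar f).1[i]? = some true →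
      (∃ n, a = var n) ∨ (∃ n m, a = app cons [var n, var m])
  /-- exhaustiveness: every ground term f(u₁,…,uₙ,u_{n+1}:t₁,…) with the uᵢ data
  normal forms is a redex of R_s -/
  exhaustive : ∀ f ts, f ∈ Ss → Ground (app f ts) →
    SymOver (Sd ∪ Ss ∪ {cons}) (app f ts) → WS ar vs (app f ts) true →
    (∀ (i : ℕ) t, ts[i]? = some t →
      ((ar f).1[i]? = some false → ∀ t', ¬ Rewrite Rd t t') ∧
      ((ar f).1[i]? = some true → ∃ u t', t = app cons [u, t'])) →
    IsRedex Rs (app f ts)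

/-- A ground term of sort s over the signature of the specification. -/
def StreamSpec.GroundStream (S : StreamSpec F) (t : Trm F) : Prop :=
  Ground t ∧ SymOver (S.Sd ∪ S.Ss ∪ {S.cons}) t ∧ WS S.ar S.vs t true

/-- Productivity of the specification on all ground terms of sort s. -/
def StreamSpec.ProductiveAll (S : StreamSpec F) : Prop :=
  ∀ t, S.GroundStream t → Productive (S.Rd ∪ S.Rs) S.cons t

/-- The additional rule `x : σ → overflow`. -/
def ovRule (c ov : F) : Rule F := (app c [var 0, var 1], app ov [])

/-! Each parallel step `xσ ⇉ xσ'` is lifted to every occurrence of `x` in a term `t`; occurrences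
of variables sit at pairwise independent positions, so all these steps together form one
parallel step `tσ ⇉ tσ'`. The root step `ℓσ' → rσ'` is an instance of the rule. -/

namespace Trm

@[elab_as_elim]
theorem induction_mem {motive : Trm F → Prop} (var : ∀ n, motive (var n))
    (app : ∀ f ts, (∀ t ∈ ts, motive t) → motive (app f ts)) : ∀ t, motive t
  | .var n => var n
  | .app f ts => app f ts fun t _ => induction_mem var app t
decreasing_by have := List.sizeOf_lt_of_mem ‹t ∈ ts›; simp; omega

@[simp] theorem subst_var (σ : ℕ → Trm F) (n : ℕ) : subst σ (var n) = σ n := by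
  rw [subst]

@[simp] theorem subst_app (σ : ℕ → Trm F) (f : F) (ts : List (Trm F)) :
    subst σ (app f ts) = app f (ts.map (subst σ)) := by
  rw [subst, List.map_attach_eq_pmap, List.pmap_eq_map]

end Trm

theorem Indep.cons {p q : List ℕ} (h : Indep p q) (i : ℕ) : Indep (i :: p) (i :: q) :=
  ⟨fun hc => h.1 (List.cons_prefix_cons.mp hc).2, fun hc => h.2 (List.cons_prefix_cons.mp hc).2⟩

theorem indep_cons_of_ne {i j : ℕ} (h : i ≠ j) (p q : List ℕ) : Indep (i :: p) (j :: q) :=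
  ⟨fun hc => h (List.cons_prefix_cons.mp hc).1, fun hc => h.symm (List.cons_prefix_cons.mp hc).1⟩

section Steps

variable {R : Set (Rule F)}

theorem rewriteAt_root_subst {l r : Trm F} (hrule : (l, r) ∈ R) (σ : ℕ → Trm F) :
    RewriteAt R (subst σ l) (subst σ r) [] :=
  ⟨l, r, σ, hrule, by rw [subtermAt], by rw [replaceAt]⟩

theorem RewriteAt.arg {t t' : Trm F} {p : List ℕ} (h : RewriteAt R t t' p) (f : F)
    {ts : List (Trm F)} {i : ℕ} (hi : ts[i]? = some t) :
    RewriteAt R (app f ts) (app f (ts.set i t')) (i :: p) := by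
  obtain ⟨l, r, σ, hrule, hsub, hrep⟩ := h
  exact ⟨l, r, σ, hrule, by simp [subtermAt, hi, hsub], by simp [replaceAt, hi, hrep]⟩

theorem StepsAt.append {t t' t'' : Trm F} {ps qs : List (List ℕ)}
    (h₁ : StepsAt R t t' ps) (h₂ : StepsAt R t' t'' qs) : StepsAt R t t'' (ps ++ qs) := by
  induction h₁ with
  | nil => exact h₂
  | cons hstep _ ih => exact .cons hstep (ih h₂)

theorem StepsAt.arg {t t' : Trm F} {ps : List (List ℕ)} (h : StepsAt R t t' ps) (f : F)
    {ts : List (Trm F)} {i : ℕ} (hi : i < ts.length) :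
    StepsAt R (app f (ts.set i t)) (app f (ts.set i t')) (ps.map (i :: ·)) := by
  induction h generalizing ts with
  | nil => exact .nil _
  | @cons t t' t'' p ps hstep _ ih =>
    have hstep' := hstep.arg f (ts := ts.set i t) (List.getElem?_set_self hi)
    rw [List.set_set] at hstep'
    simpa using StepsAt.cons hstep' (ih hi)

/-- The lower bound on the argument indices makes these steps independent of any steps
performed inside the prefix `as`. -/
theorem exists_stepsAt_app_append (f : F) {bs cs : List (Trm F)}
    (h : List.Forall₂ (ParStep R) bs cs) (as : List (Trm F)) :
    ∃ ps : List (List ℕ), ps.Pairwise Indep ∧ (∀ p ∈ ps, ∃ i q, p = i :: q ∧ as.length ≤ i) ∧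
      StepsAt R (app f (as ++ bs)) (app f (as ++ cs)) ps := by
  induction h generalizing as with
  | nil => exact ⟨[], .nil, by simp, .nil _⟩
  | @cons b c bs cs hbc _ ih =>
    obtain ⟨qs, hqs, hsteps⟩ := hbc
    have hhead := hsteps.arg f (ts := as ++ b :: bs) (i := as.length) (by simp)
    simp only [List.set_append_right _ _ le_rfl, Nat.sub_self, List.set_cons_zero] at hhead
    obtain ⟨ps, hps, hbelow, htail⟩ := ih (as ++ [c])
    simp only [List.append_assoc, List.singleton_append, List.length_append,
      List.length_singleton] at htail hbelow
    refine ⟨qs.map (as.length :: ·) ++ ps, ?_, ?_, hhead.append htail⟩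
    · refine List.pairwise_append.2 ⟨List.pairwise_map.2 (hqs.imp (Indep.cons · _)), hps, ?_⟩
      rintro _ hp p' hp'
      obtain ⟨q, -, rfl⟩ := List.mem_map.1 hp
      obtain ⟨i, q', rfl, hi⟩ := hbelow p' hp'
      exact indep_cons_of_ne (by omega) _ _
    · rintro p hp
      rcases List.mem_append.1 hp with hp | hp
      · obtain ⟨q, -, rfl⟩ := List.mem_map.1 hp
        exact ⟨_, q, rfl, le_rfl⟩
      · obtain ⟨i, q, rfl, hi⟩ := hbelow p hp
        exact ⟨i, q, rfl, by omega⟩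

theorem ParStep.app (f : F) {ts us : List (Trm F)} (h : List.Forall₂ (ParStep R) ts us) :
    ParStep R (app f ts) (app f us) :=
  let ⟨ps, hps, _, hsteps⟩ := exists_stepsAt_app_append f h []
  ⟨ps, hps, hsteps⟩

theorem ParStep.subst {σ σ' : ℕ → Trm F} (h : ∀ x, ParStep R (σ x) (σ' x)) (t : Trm F) :
    ParStep R (Trm.subst σ t) (Trm.subst σ' t) := by
  induction t using Trm.induction_mem with
  | var n => simpa using h n
  | app f ts ih =>
    simp only [subst_app]
    exact ParStep.app f (List.forall₂_map_left_iff.2 (List.forall₂_map_right_iff.2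
      (List.forall₂_same.2 ih)))

end Steps

theorem parallel_moves_lemma_general {F : Type} (R : Set (Rule F))
    (l r : Trm F) (hrule : (l, r) ∈ R)
    (σ σ' : ℕ → Trm F) (h : ∀ x, ParStep R (σ x) (σ' x)) :
    ParStep R (subst σ l) (subst σ' l) ∧
    RewriteAt R (subst σ' l) (subst σ' r) [] ∧
    ParStep R (subst σ r) (subst σ' r) :=
  ⟨ParStep.subst h l, rewriteAt_root_subst hrule σ', ParStep.subst h r⟩

/-- Parallel Moves Lemma, substitution form: if xσ ⇉ xσ' for every
variable x, then ℓσ ⇉ ℓσ' → rσ' and ℓσ → rσ ⇉ rσ'. -/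
theorem parallel_moves_lemma {F : Type} (R : Set (Rule F))
    (l r : Trm F) (hrule : (l, r) ∈ R) (hll : (varList l).Nodup)
    (σ σ' : ℕ → Trm F) (h : ∀ x, ParStep R (σ x) (σ' x)) :
    ParStep R (subst σ l) (subst σ' l) ∧
    RewriteAt R (subst σ' l) (subst σ' r) [] ∧
    ParStep R (subst σ r) (subst σ' r) :=
  parallel_moves_lemma_general R l r hrule σ σ' h
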